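/- (Classical Korovkin theorem via P-statistical convergence.) Let P be a regular power series method, let a < b be reals, and let (T_j) be a sequence of positive linear operators from C[a,b] into C[a,b] such that st_P-lim_{j→∞} ‖T_j(e_i) − e_i‖ = 0 for i = 0, 1, 2, where e_i(x) = x^i and ‖·‖ is the sup norm on C[a,b]. Then for every ψ ∈ C[a,b], st_P-lim_{j→∞} ‖T_j(ψ) − ψ‖ = 0. -/

import Mathlib

open Filter Topology
open scoped ENNReal

/-- A power series method `P`: a sequence `(s j)` of nonnegative reals with `s 0 > 0`
whose power series `s(t) = ∑ s j * t ^ j` has radius of convergence `R`, `0 < R ≤ ∞`. -/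
structure PowerSeriesMethod where
  s : ℕ → ℝ
  s_nonneg : ∀ j, 0 ≤ s j
  s0_pos : 0 < s 0
  R : ℝ≥0∞
  R_pos : 0 < R
  summable_of_lt : ∀ t : ℝ, 0 < t → ENNReal.ofReal t < R → Summable fun j => s j * t ^ j
  not_summable_of_gt : ∀ t : ℝ, R < ENNReal.ofReal t → ¬ Summable fun j => s j * t ^ j

namespace PowerSeriesMethod

/-- The filter of `t` tending to `R` from the left (through `0 < t < R`);
if `R = ∞` this is `atTop`. -/
noncomputable def limFilter (P : PowerSeriesMethod) : Filter ℝ :=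
  if P.R = ⊤ then Filter.atTop else nhdsWithin P.R.toReal (Set.Ioo 0 P.R.toReal)

/-- `s(t) = ∑ s j t ^ j`. -/
noncomputable def sum (P : PowerSeriesMethod) (t : ℝ) : ℝ := ∑' j, P.s j * t ^ j

/-- The quotient `(∑_{j ∈ E} s j t ^ j) / s(t)` whose limit as `t → R⁻` is the `P`-density. -/
noncomputable def densityFn (P : PowerSeriesMethod) (E : Set ℕ) (t : ℝ) : ℝ :=
  (∑' j, Set.indicator E (fun j => P.s j * t ^ j) j) / P.sum t

/-- `E ⊆ ℕ` has `P`-density `d`. -/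
def HasDensity (P : PowerSeriesMethod) (E : Set ℕ) (d : ℝ) : Prop :=
  Tendsto (P.densityFn E) P.limFilter (𝓝 d)

/-- The power series method `P` is regular. -/
def Regular (P : PowerSeriesMethod) : Prop :=
  ∀ j, Tendsto (fun t => P.s j * t ^ j / P.sum t) P.limFilter (𝓝 0)

/-- The sequence `x` is `P`-statistically convergent to `L`. -/
def StatTendsto (P : PowerSeriesMethod) (x : ℕ → ℝ) (L : ℝ) : Prop :=
  ∀ ε : ℝ, 0 < ε → P.HasDensity {j | ε ≤ |x j - L|} 0

end PowerSeriesMethod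

/-- The monomial `eₙ(x) = xⁿ` as an element of `C([a,b], ℝ)`. -/
noncomputable def monomial (a b : ℝ) (i : ℕ) : C(Set.Icc a b, ℝ) :=
  ⟨fun x => (x : ℝ) ^ i, by continuity⟩

/-!
Uniform continuity gives `|f y - f x| ≤ ε + c (y - x)²`. Applying a positive operator `T` to
this inequality, with the test function `(y - x)² = e₂ - 2x e₁ + x² e₀`, yields
`‖T f - f‖ ≤ ε + K ∑ᵢ ‖T eᵢ - eᵢ‖` with `K` independent of `T`. Statistical convergence to `0`
survives sums, scalar multiples and such domination, because the sets of `P`-density zero are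
closed under subsets and finite unions.
-/

namespace PowerSeriesMethod

variable (P : PowerSeriesMethod)

lemma eventually_pos_and_summable :
    ∀ᶠ t in P.limFilter, 0 < t ∧ Summable fun j => P.s j * t ^ j := by
  suffices ∀ᶠ t in P.limFilter, 0 < t ∧ ENNReal.ofReal t < P.R from
    this.mono fun t ht => ⟨ht.1, P.summable_of_lt t ht.1 ht.2⟩
  unfold limFilter
  split_ifs with hR
  · filter_upwards [eventually_gt_atTop (0 : ℝ)] with t ht
    exact ⟨ht, hR ▸ ENNReal.ofReal_lt_top⟩
  · filter_upwards [self_mem_nhdsWithin] with t ht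
    refine ⟨ht.1, ?_⟩
    rw [← ENNReal.ofReal_toReal hR]
    exact (ENNReal.ofReal_lt_ofReal_iff (ENNReal.toReal_pos P.R_pos.ne' hR)).2 ht.2

section densityFn

variable {P} {t : ℝ}

lemma term_nonneg (ht : 0 ≤ t) (j : ℕ) : 0 ≤ P.s j * t ^ j :=
  mul_nonneg (P.s_nonneg j) (pow_nonneg ht j)

lemma sum_nonneg (ht : 0 ≤ t) : 0 ≤ P.sum t := tsum_nonneg (term_nonneg ht)

lemma densityFn_nonneg (ht : 0 ≤ t) (E : Set ℕ) : 0 ≤ P.densityFn E t :=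
  div_nonneg (tsum_nonneg (Set.indicator_nonneg fun j _ => term_nonneg ht j)) (sum_nonneg ht)

lemma densityFn_mono (ht : 0 ≤ t) (hs : Summable fun j => P.s j * t ^ j) {E F : Set ℕ}
    (hEF : E ⊆ F) :
    P.densityFn E t ≤ P.densityFn F t := by
  refine div_le_div_of_nonneg_right ?_ (sum_nonneg ht)
  exact (hs.indicator E).tsum_le_tsum
    (Set.indicator_le_indicator_of_subset hEF (term_nonneg ht)) (hs.indicator F)

lemma densityFn_union_le (ht : 0 ≤ t) (hs : Summable fun j => P.s j * t ^ j) (A B : Set ℕ) :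
    P.densityFn (A ∪ B) t ≤ P.densityFn A t + P.densityFn B t := by
  rw [densityFn, densityFn, densityFn, ← add_div, ← (hs.indicator A).tsum_add (hs.indicator B)]
  refine div_le_div_of_nonneg_right ((hs.indicator _).tsum_le_tsum (fun j => ?_)
    ((hs.indicator A).add (hs.indicator B))) (sum_nonneg ht)
  have hsplit := congrFun (Set.indicator_union_add_inter (fun j => P.s j * t ^ j) A B) j
  have hinter := Set.indicator_nonneg (s := A ∩ B) (fun j _ => term_nonneg (P := P) ht j) j
  simp only [Pi.add_apply] at hsplit
  linarith

end densityFn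

variable {P}

lemma HasDensity.zero_mono {E F : Set ℕ} (hF : P.HasDensity F 0) (hEF : E ⊆ F) :
    P.HasDensity E 0 :=
  squeeze_zero' (P.eventually_pos_and_summable.mono fun _ ht => densityFn_nonneg ht.1.le E)
    (P.eventually_pos_and_summable.mono fun _ ht => densityFn_mono ht.1.le ht.2 hEF) hF

lemma HasDensity.zero_union {A B : Set ℕ} (hA : P.HasDensity A 0) (hB : P.HasDensity B 0) :
    P.HasDensity (A ∪ B) 0 :=
  squeeze_zero' (P.eventually_pos_and_summable.mono fun _ ht => densityFn_nonneg ht.1.le _)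
    (P.eventually_pos_and_summable.mono fun _ ht => densityFn_union_le ht.1.le ht.2 A B)
    (by simpa using hA.add hB)

lemma hasDensity_empty : P.HasDensity ∅ 0 := by
  have : P.densityFn ∅ = fun _ => 0 := funext fun t => by simp [densityFn]
  rw [HasDensity, this]
  exact tendsto_const_nhds

lemma statTendsto_const (c : ℝ) : P.StatTendsto (fun _ => c) c := by
  intro ε hε
  convert hasDensity_empty
  ext j
  simpa using hε

lemma StatTendsto.add {x y : ℕ → ℝ} {L M : ℝ} (hx : P.StatTendsto x L)
    (hy : P.StatTendsto y M) : P.StatTendsto (x + y) (L + M) := by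
  intro ε hε
  refine ((hx _ (half_pos hε)).zero_union (hy _ (half_pos hε))).zero_mono fun j hj => ?_
  by_contra hnot
  simp only [Set.mem_union, Set.mem_ofPred_eq, not_or, not_le] at hnot hj
  have : |x j + y j - (L + M)| ≤ |x j - L| + |y j - M| := by
    rw [add_sub_add_comm]; exact abs_add_le _ _
  simp only [Pi.add_apply] at hj
  linarith

lemma StatTendsto.const_mul {x : ℕ → ℝ} {L : ℝ} (hx : P.StatTendsto x L) (c : ℝ) :
    P.StatTendsto (fun j => c * x j) (c * L) := by
  intro ε hε
  have hc : 0 < |c| + 1 := by positivity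
  refine (hx _ (div_pos hε hc)).zero_mono fun j hj => ?_
  by_contra hnot
  simp only [Set.mem_ofPred_eq, not_le, lt_div_iff₀ hc] at hnot hj
  rw [← mul_sub, abs_mul] at hj
  nlinarith [abs_nonneg (x j - L)]

lemma statTendsto_sum {ι : Type*} (s : Finset ι) {x : ι → ℕ → ℝ}
    (hx : ∀ i ∈ s, P.StatTendsto (x i) 0) : P.StatTendsto (fun j => ∑ i ∈ s, x i j) 0 := by
  simp_rw [← Finset.sum_apply]
  exact Finset.sum_induction _ (P.StatTendsto · 0)
    (fun _ _ ha hb => by simpa using ha.add hb) (statTendsto_const 0) hx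

lemma statTendsto_of_forall_abs_sub_le {x : ℕ → ℝ} {L : ℝ}
    (h : ∀ ε > 0, ∃ y : ℕ → ℝ, P.StatTendsto y 0 ∧ ∀ j, |x j - L| ≤ ε + y j) :
    P.StatTendsto x L := by
  intro ε hε
  obtain ⟨y, hy, hxy⟩ := h _ (half_pos hε)
  refine (hy _ (half_pos hε)).zero_mono fun j hj => ?_
  simp only [Set.mem_ofPred_eq, sub_zero] at hj ⊢
  linarith [hxy j, le_abs_self (y j)]

end PowerSeriesMethod

lemma ContinuousMap.exists_abs_sub_le_add_mul_dist_sq {X : Type*} [PseudoMetricSpace X]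
    [CompactSpace X] (f : C(X, ℝ)) {ε : ℝ} (hε : 0 < ε) :
    ∃ c ≥ 0, ∀ x y, |f y - f x| ≤ ε + c * dist y x ^ 2 := by
  obtain ⟨δ, hδ, hfδ⟩ := Metric.uniformContinuous_iff.mp
    (CompactSpace.uniformContinuous_of_continuous f.continuous) ε hε
  refine ⟨2 * ‖f‖ / δ ^ 2, by positivity, fun x y => ?_⟩
  have hc : 0 ≤ 2 * ‖f‖ / δ ^ 2 * dist y x ^ 2 := by positivity
  rcases lt_or_ge (dist y x) δ with hnear | hfar
  · linarith [(Real.dist_eq _ _).symm.trans_lt (hfδ hnear)]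
  · calc |f y - f x| ≤ 2 * ‖f‖ := by simpa [Real.dist_eq] using f.dist_le_two_norm y x
      _ = 2 * ‖f‖ / δ ^ 2 * δ ^ 2 := by field_simp
      _ ≤ 2 * ‖f‖ / δ ^ 2 * dist y x ^ 2 := by gcongr
      _ ≤ ε + 2 * ‖f‖ / δ ^ 2 * dist y x ^ 2 := by linarith

lemma LinearMap.abs_apply_le_apply_of_abs_le {X Y : Type*} [TopologicalSpace X]
    [TopologicalSpace Y] {T : C(X, ℝ) →ₗ[ℝ] C(Y, ℝ)} (hT : ∀ f, 0 ≤ f → 0 ≤ T f)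
    {g h : C(X, ℝ)} (hgh : ∀ x, |g x| ≤ h x) (y : Y) : |T g y| ≤ T h y := by
  have hsub := hT (h - g) <| ContinuousMap.le_def.mpr fun x => by
    simpa using (abs_le.mp (hgh x)).2
  have hadd := hT (h + g) <| ContinuousMap.le_def.mpr fun x => by
    simpa [neg_le_iff_add_nonneg, add_comm] using (abs_le.mp (hgh x)).1
  have hsub' := ContinuousMap.le_def.mp hsub y
  have hadd' := ContinuousMap.le_def.mp hadd y
  simp only [map_sub, map_add, ContinuousMap.zero_apply, ContinuousMap.sub_apply,
    ContinuousMap.add_apply] at hsub' hadd'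
  exact abs_le.mpr ⟨by linarith, by linarith⟩

@[simp]
lemma monomial_apply (a b : ℝ) (i : ℕ) (x : Set.Icc a b) : monomial a b i x = (x : ℝ) ^ i := rfl

lemma abs_apply_sub_le_of_abs_sub_le {a b : ℝ} {T : C(Set.Icc a b, ℝ) →ₗ[ℝ] C(Set.Icc a b, ℝ)}
    (hT : ∀ f, 0 ≤ f → 0 ≤ T f) (f : C(Set.Icc a b, ℝ))
    (x : Set.Icc a b) {ε c : ℝ} (hf : ∀ y, |f y - f x| ≤ ε + c * ((y : ℝ) - x) ^ 2) :
    |T f x - f x| ≤ ε + ε * (T (monomial a b 0) - monomial a b 0) x +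
      |f x| * |(T (monomial a b 0) - monomial a b 0) x| +
      c * ((T (monomial a b 2) - monomial a b 2) x -
        2 * x * (T (monomial a b 1) - monomial a b 1) x +
        (x : ℝ) ^ 2 * (T (monomial a b 0) - monomial a b 0) x) := by
  set e := monomial a b
  set g := f - f x • e 0
  set q := e 2 - (2 * (x : ℝ)) • e 1 + (x : ℝ) ^ 2 • e 0
  have hg : |T g x| ≤ T (ε • e 0 + c • q) x :=
    LinearMap.abs_apply_le_apply_of_abs_le hT (fun y => by
      convert hf y using 1
      · simp [g, e]
      · simp [q, e]; ring) x
  have hTf : T f x - f x = T g x + f x * (T (e 0) - e 0) x := by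
    simp [g, e]; ring
  have hTq : T (ε • e 0 + c • q) x = ε + ε * (T (e 0) - e 0) x +
      c * ((T (e 2) - e 2) x - 2 * x * (T (e 1) - e 1) x + (x : ℝ) ^ 2 * (T (e 0) - e 0) x) := by
    simp [q, e]; ring
  rw [hTf]
  calc |T g x + f x * (T (e 0) - e 0) x|
      ≤ |T g x| + |f x| * |(T (e 0) - e 0) x| := (abs_add_le _ _).trans_eq (by rw [abs_mul])
    _ ≤ _ := by rw [hTq] at hg; linarith

lemma exists_norm_sub_le_add_mul_sum {a b : ℝ} (f : C(Set.Icc a b, ℝ)) {ε : ℝ} (hε : 0 < ε) :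
    ∃ K, ∀ T : C(Set.Icc a b, ℝ) →ₗ[ℝ] C(Set.Icc a b, ℝ), (∀ g, 0 ≤ g → 0 ≤ T g) →
      ‖T f - f‖ ≤ ε + K * ∑ i ∈ ({0, 1, 2} : Finset ℕ), ‖T (monomial a b i) - monomial a b i‖ := by
  obtain ⟨c, hc, hfc⟩ := f.exists_abs_sub_le_add_mul_dist_sq hε
  set M := max |a| |b|
  refine ⟨ε + ‖f‖ + c * (1 + M) ^ 2, fun T hT => ?_⟩
  set N := ∑ i ∈ ({0, 1, 2} : Finset ℕ), ‖T (monomial a b i) - monomial a b i‖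
  have hN : 0 ≤ N := Finset.sum_nonneg fun _ _ => norm_nonneg _
  have hd : ∀ i ∈ ({0, 1, 2} : Finset ℕ), ∀ x, |(T (monomial a b i) - monomial a b i) x| ≤ N :=
    fun i hi x => ((T (monomial a b i) - monomial a b i).norm_coe_le_norm x).trans
      (Finset.single_le_sum (f := fun i => ‖T (monomial a b i) - monomial a b i‖)
        (fun _ _ => norm_nonneg _) hi)
  refine (ContinuousMap.norm_le _ (by positivity)).mpr fun x => ?_
  have hx : |(x : ℝ)| ≤ M := abs_le_max_abs_abs x.2.1 x.2.2
  have hfx : |f x| ≤ ‖f‖ := f.norm_coe_le_norm x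
  have hf : ∀ y, |f y - f x| ≤ ε + c * ((y : ℝ) - x) ^ 2 := fun y => by
    simpa [Subtype.dist_eq, Real.dist_eq, sq_abs] using hfc x y
  have hd₀ := abs_le.mp (hd 0 (by simp) x)
  have hd₂ := abs_le.mp (hd 2 (by simp) x)
  have hq : (T (monomial a b 2) - monomial a b 2) x -
      2 * x * (T (monomial a b 1) - monomial a b 1) x +
      (x : ℝ) ^ 2 * (T (monomial a b 0) - monomial a b 0) x ≤ (1 + M) ^ 2 * N := by
    have h₁ : |x * (T (monomial a b 1) - monomial a b 1) x| ≤ M * N := by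
      rw [abs_mul]
      exact mul_le_mul hx (hd 1 (by simp) x) (abs_nonneg _) ((abs_nonneg _).trans hx)
    have h₀ := mul_le_mul_of_nonneg_left hd₀.2 (sq_nonneg (x : ℝ))
    have hx2 : (x : ℝ) ^ 2 ≤ M ^ 2 := sq_le_sq' (abs_le.mp hx).1 (abs_le.mp hx).2
    nlinarith [neg_abs_le (x * (T (monomial a b 1) - monomial a b 1) x)]
  calc ‖T f x - f x‖ = |T f x - f x| := Real.norm_eq_abs _
    _ ≤ _ := abs_apply_sub_le_of_abs_sub_le hT f x hf
    _ ≤ ε + ε * N + ‖f‖ * N + c * ((1 + M) ^ 2 * N) := by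
      gcongr
      · exact hd₀.2
      · exact hd 0 (by simp) x
    _ = ε + (ε + ‖f‖ + c * (1 + M) ^ 2) * N := by ring

theorem classical_korovkin_pstat_general (P : PowerSeriesMethod)
    (a b : ℝ)
    (T : ℕ → C(Set.Icc a b, ℝ) →ₗ[ℝ] C(Set.Icc a b, ℝ))
    (hTpos : ∀ j (f : C(Set.Icc a b, ℝ)), 0 ≤ f → 0 ≤ T j f)
    (hTconv : ∀ i ∈ ({0, 1, 2} : Finset ℕ),
      P.StatTendsto (fun j => ‖T j (monomial a b i) - monomial a b i‖) 0) :
    ∀ f : C(Set.Icc a b, ℝ), P.StatTendsto (fun j => ‖T j f - f‖) 0 := by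
  intro f
  refine PowerSeriesMethod.statTendsto_of_forall_abs_sub_le fun ε hε => ?_
  obtain ⟨K, hK⟩ := exists_norm_sub_le_add_mul_sum f hε
  refine ⟨_, by simpa using (PowerSeriesMethod.statTendsto_sum _ hTconv).const_mul K, fun j => ?_⟩
  simpa using hK (T j) (hTpos j)

/-- classical Korovkin theorem via `P`-statistical convergence on `C[a,b]`. -/
theorem classical_korovkin_pstat (P : PowerSeriesMethod) (hP : P.Regular)
    (a b : ℝ) (hab : a < b)
    (T : ℕ → C(Set.Icc a b, ℝ) →ₗ[ℝ] C(Set.Icc a b, ℝ))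
    (hTpos : ∀ j (f : C(Set.Icc a b, ℝ)), 0 ≤ f → 0 ≤ T j f)
    (hTconv : ∀ i ∈ ({0, 1, 2} : Finset ℕ),
      P.StatTendsto (fun j => ‖T j (monomial a b i) - monomial a b i‖) 0) :
    ∀ f : C(Set.Icc a b, ℝ), P.StatTendsto (fun j => ‖T j f - f‖) 0 :=
  classical_korovkin_pstat_general P a b T hTpos hTconv
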